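/- For each κ ∈ ℝ with κ² < 1/3, let ψ ∈ ℝ be such that e^{iψ} = (√2·κ + i√(1−3κ²))/√(1−κ²) (note the right-hand side has modulus 1). Then there exists C > 0 such that for all y ≥ 0, |a_d(y;κ) − e^{iψ} a_*(y;κ)| + |b_d(y;κ) − e^{iψ} b_*(y;κ)| ≤ C·exp(−√2·√(1−3κ²)·y). In particular, the defect solution converges as y → +∞ to a phase-rotated periodic orbit of the same wavenumber κ. -/

import Mathlib

open Filter Set

/-- The defect solution a_d(y;κ) of the σ = −1 Ginzburg–Landau system. -/
noncomputable def defectA (κ : ℝ) (y : ℝ) : ℂ :=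
  ((Real.sqrt 2 * κ : ℝ) +
      Complex.I * (Real.sqrt (1 - 3 * κ ^ 2) : ℂ) *
        (Real.tanh (Real.sqrt (1 - 3 * κ ^ 2) * y / Real.sqrt 2) : ℂ)) *
    Complex.exp (Complex.I * κ * y)

/-- b_d(y;κ) = ∂_y a_d(y;κ). -/
noncomputable def defectB (κ : ℝ) : ℝ → ℂ := deriv (defectA κ)

/-- The periodic orbit a_*(y;κ) = √(1−κ²)e^{iκy}. -/
noncomputable def periodicA (κ : ℝ) (y : ℝ) : ℂ :=
  (Real.sqrt (1 - κ ^ 2) : ℂ) * Complex.exp (Complex.I * κ * y)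

/-- The periodic orbit b_*(y;κ) = iκ√(1−κ²)e^{iκy}. -/
noncomputable def periodicB (κ : ℝ) (y : ℝ) : ℂ :=
  Complex.I * κ * (Real.sqrt (1 - κ ^ 2) : ℂ) * Complex.exp (Complex.I * κ * y)

/-
The phase ψ is chosen so that `e^{iψ} a_*` is exactly the limit profile
`(√2 κ + i α) e^{iκy}` of the defect, where `α = √(1 - 3κ²)`. With `t = α y / √2` this gives
`a_d - e^{iψ} a_* = i α (tanh t - 1) e^{iκy}`, and `1 - tanh t = 2 / (e^{2t} + 1) ≤ 2 e^{-2t}`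
with `2t = √2 α y`. Since `b_d = a_d'` and `b_* = iκ a_*`, the `b`-difference is `iκ` times the
`a`-difference plus a `sech² t` term, and `sech² t = (1 - tanh t)(1 + tanh t) ≤ 2 (1 - tanh t)`.
-/
namespace Real

theorem hasDerivAt_tanh (x : ℝ) : HasDerivAt tanh (1 - tanh x ^ 2) x := by
  have h := (hasDerivAt_sinh x).div (hasDerivAt_cosh x) (cosh_pos x).ne'
  rw [show sinh / cosh = tanh from funext fun y => (tanh_eq_sinh_div_cosh y).symm] at h
  refine h.congr_deriv ?_
  rw [tanh_eq_sinh_div_cosh]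
  field_simp

theorem one_sub_tanh_le (x : ℝ) : 1 - tanh x ≤ 2 * exp (-(2 * x)) := by
  have h : 1 - tanh x = 2 / (exp x ^ 2 + 1) := by
    rw [tanh_eq, exp_neg]
    field_simp
    ring
  rw [h, show -(2 * x) = -x + -x by ring, exp_add, exp_neg]
  rw [div_le_iff₀ (by positivity)]
  field_simp
  nlinarith

theorem one_sub_tanh_sq_le (x : ℝ) : 1 - tanh x ^ 2 ≤ 2 * (1 - tanh x) := by
  nlinarith [tanh_lt_one x, neg_one_lt_tanh x]

theorem two_mul_div_sqrt_two (x : ℝ) : 2 * (x / √2) = √2 * x := by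
  rw [mul_div_assoc', div_eq_iff (by positivity), mul_assoc, mul_comm x, ← mul_assoc,
    mul_self_sqrt zero_le_two]

end Real

/-- `e^{iψ} a_*`, with `e^{iψ} √(1-κ²) = √2 κ + i √(1-3κ²)` multiplied out. -/
noncomputable def defectAsymptote (κ y : ℝ) : ℂ :=
  ((Real.sqrt 2 * κ : ℝ) + Complex.I * (Real.sqrt (1 - 3 * κ ^ 2) : ℂ)) *
    Complex.exp (Complex.I * κ * y)

theorem hasDerivAt_exp_I_mul (κ y : ℝ) :
    HasDerivAt (fun y : ℝ => Complex.exp (Complex.I * κ * y))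
      (Complex.I * κ * Complex.exp (Complex.I * κ * y)) y := by
  have h : HasDerivAt (fun z : ℂ => Complex.exp (Complex.I * κ * z))
      (Complex.I * κ * Complex.exp (Complex.I * κ * y)) y := by
    simpa [mul_comm] using ((hasDerivAt_id (y : ℂ)).const_mul (Complex.I * κ)).cexp
  exact h.comp_ofReal

theorem norm_exp_I_mul_mul (κ y : ℝ) : ‖Complex.exp (Complex.I * κ * y)‖ = 1 := by
  rw [mul_assoc, ← Complex.ofReal_mul, Complex.norm_exp_I_mul_ofReal]

theorem hasDerivAt_defectA (κ y : ℝ) :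
    HasDerivAt (defectA κ)
      (Complex.I * ((Real.sqrt (1 - 3 * κ ^ 2) ^ 2 / Real.sqrt 2 *
          (1 - Real.tanh (Real.sqrt (1 - 3 * κ ^ 2) * y / Real.sqrt 2) ^ 2) : ℝ) : ℂ) *
          Complex.exp (Complex.I * κ * y) +
        Complex.I * κ * defectA κ y) y := by
  set α := Real.sqrt (1 - 3 * κ ^ 2)
  have htanh : HasDerivAt (fun y : ℝ => Real.tanh (α * y / Real.sqrt 2))
      ((1 - Real.tanh (α * y / Real.sqrt 2) ^ 2) * (α / Real.sqrt 2)) y :=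
    (Real.hasDerivAt_tanh _).comp y (((hasDerivAt_id y).const_mul α).div_const _ |>.congr_deriv
      (by simp))
  have hprofile := (htanh.ofReal_comp.const_mul (Complex.I * (α : ℂ))).const_add
    ((Real.sqrt 2 * κ : ℝ) : ℂ)
  refine (hprofile.mul (hasDerivAt_exp_I_mul κ y)).congr_deriv ?_
  simp only [defectA]
  push_cast
  ring

theorem defectB_eq (κ y : ℝ) :
    defectB κ y =
      Complex.I * ((Real.sqrt (1 - 3 * κ ^ 2) ^ 2 / Real.sqrt 2 *
          (1 - Real.tanh (Real.sqrt (1 - 3 * κ ^ 2) * y / Real.sqrt 2) ^ 2) : ℝ) : ℂ) *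
          Complex.exp (Complex.I * κ * y) +
        Complex.I * κ * defectA κ y :=
  (hasDerivAt_defectA κ y).deriv

theorem periodicB_eq (κ y : ℝ) : periodicB κ y = Complex.I * κ * periodicA κ y := by
  simp only [periodicA, periodicB]
  ring

theorem div_sqrt_mul_periodicA {κ : ℝ} (hκ : κ ^ 2 < 1) (z : ℂ) (y : ℝ) :
    z / (Real.sqrt (1 - κ ^ 2) : ℂ) * periodicA κ y = z * Complex.exp (Complex.I * κ * y) := by
  have hs : (Real.sqrt (1 - κ ^ 2) : ℂ) ≠ 0 :=
    Complex.ofReal_ne_zero.mpr (Real.sqrt_pos.mpr (by linarith)).ne'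
  rw [periodicA]
  field_simp

theorem norm_defectA_sub_defectAsymptote (κ y : ℝ) :
    ‖defectA κ y - defectAsymptote κ y‖ =
      Real.sqrt (1 - 3 * κ ^ 2) *
        (1 - Real.tanh (Real.sqrt (1 - 3 * κ ^ 2) * y / Real.sqrt 2)) := by
  set α := Real.sqrt (1 - 3 * κ ^ 2)
  set t := α * y / Real.sqrt 2
  have h : defectA κ y - defectAsymptote κ y =
      Complex.I * ((α * (Real.tanh t - 1) : ℝ) : ℂ) * Complex.exp (Complex.I * κ * y) := by
    simp only [defectA, defectAsymptote, Complex.ofReal_mul, Complex.ofReal_sub,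
      Complex.ofReal_one]
    ring
  rw [h, norm_mul, norm_mul, Complex.norm_I, norm_exp_I_mul_mul, Complex.norm_real,
    Real.norm_eq_abs, abs_of_nonpos]
  · ring
  · exact mul_nonpos_of_nonneg_of_nonpos (Real.sqrt_nonneg _) (by linarith [Real.tanh_lt_one t])

theorem norm_defectB_sub_le (κ y : ℝ) :
    ‖defectB κ y - Complex.I * κ * defectAsymptote κ y‖ ≤
      (Real.sqrt 2 * Real.sqrt (1 - 3 * κ ^ 2) + |κ|) *
        ‖defectA κ y - defectAsymptote κ y‖ := by
  set α := Real.sqrt (1 - 3 * κ ^ 2)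
  set t := α * y / Real.sqrt 2
  have h : defectB κ y - Complex.I * κ * defectAsymptote κ y =
      Complex.I * ((α ^ 2 / Real.sqrt 2 * (1 - Real.tanh t ^ 2) : ℝ) : ℂ) *
          Complex.exp (Complex.I * κ * y) +
        Complex.I * κ * (defectA κ y - defectAsymptote κ y) := by
    rw [defectB_eq]
    ring
  have hsech : α ^ 2 / Real.sqrt 2 * (1 - Real.tanh t ^ 2) ≤
      Real.sqrt 2 * α * ‖defectA κ y - defectAsymptote κ y‖ := by
    rw [norm_defectA_sub_defectAsymptote]
    calc α ^ 2 / Real.sqrt 2 * (1 - Real.tanh t ^ 2)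
        ≤ α ^ 2 / Real.sqrt 2 * (2 * (1 - Real.tanh t)) := by
          gcongr
          exact Real.one_sub_tanh_sq_le t
      _ = Real.sqrt 2 * α * (α * (1 - Real.tanh t)) := by
          linear_combination (1 - Real.tanh t) * Real.two_mul_div_sqrt_two (α ^ 2)
  calc ‖defectB κ y - Complex.I * κ * defectAsymptote κ y‖
      ≤ α ^ 2 / Real.sqrt 2 * (1 - Real.tanh t ^ 2) +
          |κ| * ‖defectA κ y - defectAsymptote κ y‖ := by
        rw [h]
        refine (norm_add_le _ _).trans_eq ?_
        rw [norm_mul, norm_mul, norm_mul, norm_mul, Complex.norm_I, norm_exp_I_mul_mul,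
          Complex.norm_real, Complex.norm_real, Real.norm_eq_abs, Real.norm_eq_abs,
          abs_of_nonneg (mul_nonneg (by positivity) (by linarith [Real.tanh_sq_lt_one t]))]
        ring
    _ ≤ _ := by linear_combination hsech

theorem norm_defectA_sub_defectAsymptote_le (κ y : ℝ) :
    ‖defectA κ y - defectAsymptote κ y‖ ≤
      2 * Real.sqrt (1 - 3 * κ ^ 2) *
        Real.exp (-(Real.sqrt 2 * Real.sqrt (1 - 3 * κ ^ 2)) * y) := by
  set α := Real.sqrt (1 - 3 * κ ^ 2)
  rw [norm_defectA_sub_defectAsymptote]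
  calc α * (1 - Real.tanh (α * y / Real.sqrt 2))
      ≤ α * (2 * Real.exp (-(2 * (α * y / Real.sqrt 2)))) := by
        gcongr
        exact Real.one_sub_tanh_le _
    _ = _ := by
        rw [Real.two_mul_div_sqrt_two, ← mul_assoc (Real.sqrt 2), neg_mul]
        ring

/-- **Exponential convergence of the defect solution to a phase-rotated
periodic orbit.** For κ² < 1/3 and ψ with e^{iψ} = (√2κ + i√(1−3κ²))/√(1−κ²),
there exists C > 0 such that for all y ≥ 0,
|a_d − e^{iψ}a_*| + |b_d − e^{iψ}b_*| ≤ C e^{−√2·√(1−3κ²)·y}. -/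
theorem defect_converges_to_periodic
    (κ ψ : ℝ) (hκ : κ ^ 2 < 1 / 3)
    (hψ : Complex.exp (Complex.I * ψ) =
      ((Real.sqrt 2 * κ : ℝ) + Complex.I * (Real.sqrt (1 - 3 * κ ^ 2) : ℂ)) /
        (Real.sqrt (1 - κ ^ 2) : ℂ)) :
    ∃ C > (0 : ℝ), ∀ y : ℝ, 0 ≤ y →
      ‖defectA κ y - Complex.exp (Complex.I * ψ) * periodicA κ y‖ +
          ‖defectB κ y - Complex.exp (Complex.I * ψ) * periodicB κ y‖
        ≤ C * Real.exp (-(Real.sqrt 2 * Real.sqrt (1 - 3 * κ ^ 2)) * y) := by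
  set α := Real.sqrt (1 - 3 * κ ^ 2)
  have hα : 0 < α := Real.sqrt_pos.mpr (by linarith)
  have hphaseA (y : ℝ) : Complex.exp (Complex.I * ψ) * periodicA κ y = defectAsymptote κ y := by
    rw [hψ, div_sqrt_mul_periodicA (by linarith) _ y, defectAsymptote]
  have hphaseB (y : ℝ) :
      Complex.exp (Complex.I * ψ) * periodicB κ y = Complex.I * κ * defectAsymptote κ y := by
    rw [periodicB_eq, ← hphaseA]
    ring
  refine ⟨2 * α * (1 + Real.sqrt 2 * α + |κ|), by positivity, fun y _ => ?_⟩
  rw [hphaseA, hphaseB]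
  calc _ ≤ (1 + Real.sqrt 2 * α + |κ|) * ‖defectA κ y - defectAsymptote κ y‖ := by
        linarith [norm_defectB_sub_le κ y]
    _ ≤ (1 + Real.sqrt 2 * α + |κ|) * (2 * α * Real.exp (-(Real.sqrt 2 * α) * y)) := by
        gcongr
        exact norm_defectA_sub_defectAsymptote_le κ y
    _ = _ := by ring
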